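/- arXiv:math/0211157 — 3 statements merged into one kernel-verified Lean document; each statement's English description precedes it below -/
import Mathlib

section
/- Let F_n be a free group of rank n ≥ 2 and let k be a positive integer such that Aut(F_n) contains an element of order k. Then there exist φ ∈ Aut(F_n) and u ∈ F_n such that the orbit Orb_φ(u) = {φ^m(u) : m ≥ 0} has cardinality exactly k. -/
/-!
Free groups have unique roots (they are `IsMulTorsionFree`), so an automorphism fixing a
finite-index subgroup pointwise fixes every element: each `x` has a power `x ^ n` in the
subgroup, and `φ x ^ n = x ^ n` forces `φ x = x`. By B. H. Neumann's lemma a group is not covered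
by finitely many cosets of infinite-index subgroups, so some `u` is moved by every `φ ^ m` with
`0 < m < orderOf φ`; the orbit of this `u` then has exactly `orderOf φ` elements.
-/

open Function
open scoped Pointwise

theorem Function.ncard_range_iterate_of_mem_periodicPts {α : Type*} {f : α → α} {x : α}
    (hx : x ∈ periodicPts f) : (Set.range fun n => f^[n] x).ncard = minimalPeriod f x := by
  have hrange :
      (Set.range fun n => f^[n] x) = (fun n => f^[n] x) '' Set.Iio (minimalPeriod f x) := by
    refine (Set.image_subset_range _ _).antisymm' ?_
    rintro _ ⟨n, rfl⟩
    exact ⟨n % minimalPeriod f x, Nat.mod_lt _ (minimalPeriod_pos_of_mem_periodicPts hx),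
      iterate_mod_minimalPeriod_eq⟩
  rw [hrange, iterate_injOn_Iio_minimalPeriod.ncard_image, ← Finset.coe_range,
    Set.ncard_coe_finset, Finset.card_range]

theorem MulAction.ncard_range_pow_smul {M α : Type*} [Monoid M] [MulAction M α] {m : M} {a : α}
    (h : 0 < period m a) : (Set.range fun n : ℕ => m ^ n • a).ncard = period m a := by
  simp_rw [← smul_iterate, period_eq_minimalPeriod] at h ⊢
  exact ncard_range_iterate_of_mem_periodicPts (minimalPeriod_pos_iff_mem_periodicPts.mp h)

theorem MonoidHom.eq_of_finiteIndex_eqLocus {G H : Type*} [Group G] [Group H] [IsMulTorsionFree H]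
    {f g : G →* H} (hfg : (f.eqLocus g).FiniteIndex) : f = g := by
  ext x
  obtain ⟨n, hn, -, hxn⟩ := Subgroup.exists_pow_mem_of_index_ne_zero hfg.index_ne_zero x
  have hfgn : f (x ^ n) = g (x ^ n) := hxn
  exact pow_left_injective hn.ne' (by simpa only [map_pow] using hfgn)

theorem MonoidHom.exists_forall_apply_ne {ι G H : Type*} [Group G] [Group H] [IsMulTorsionFree H]
    {s : Finset ι} {f g : ι → G →* H} (hfg : ∀ i ∈ s, f i ≠ g i) :
    ∃ x, ∀ i ∈ s, f i x ≠ g i x := by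
  by_contra! hcover
  obtain ⟨i, hi, hfin⟩ := Subgroup.exists_finiteIndex_of_leftCoset_cover
    (g := fun _ => (1 : G)) (H := fun i => (f i).eqLocus (g i)) (s := s) <| by
      refine Set.eq_univ_of_forall fun x => ?_
      obtain ⟨i, hi, hx⟩ := hcover x
      exact Set.mem_biUnion hi (by simp only [one_smul]; exact hx)
  exact hfg i hi (eq_of_finiteIndex_eqLocus hfin)

theorem MulAut.exists_period_eq_orderOf {G : Type*} [Group G] [IsMulTorsionFree G] (φ : MulAut G)
    (hφ : 0 < orderOf φ) : ∃ u : G, MulAction.period φ u = orderOf φ := by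
  obtain ⟨u, hu⟩ := MonoidHom.exists_forall_apply_ne (s := Finset.Ioo 0 (orderOf φ))
    (f := fun m => (φ ^ m).toMonoidHom) (g := fun _ => MonoidHom.id G) fun m hm hφm => by
      rw [Finset.mem_Ioo] at hm
      refine pow_ne_one_of_lt_orderOf hm.1.ne' hm.2 (MulEquiv.ext fun x => ?_)
      exact DFunLike.congr_fun hφm x
  refine ⟨u, (MulAction.period_le_orderOf hφ u).antisymm (not_lt.mp fun hlt => ?_)⟩
  exact hu _ (Finset.mem_Ioo.mpr ⟨MulAction.period_pos_of_orderOf_pos hφ u, hlt⟩)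
    (MulAction.pow_period_smul φ u)

theorem orbit_of_cardinality_k_exists_general (n : ℕ) (k : ℕ) (hk : 0 < k)
    (h : ∃ φ : MulAut (FreeGroup (Fin n)), orderOf φ = k) :
    ∃ (φ : MulAut (FreeGroup (Fin n))) (u : FreeGroup (Fin n)),
      {v : FreeGroup (Fin n) | ∃ m : ℕ, (φ ^ m) u = v}.ncard = k := by
  obtain ⟨φ, rfl⟩ := h
  obtain ⟨u, hu⟩ := MulAut.exists_period_eq_orderOf φ hk
  refine ⟨φ, u, ?_⟩
  rw [← hu, ← MulAction.ncard_range_pow_smul (hu ▸ hk)]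
  rfl

theorem orbit_of_cardinality_k_exists (n : ℕ) (hn : 2 ≤ n) (k : ℕ) (hk : 0 < k)
    (h : ∃ φ : MulAut (FreeGroup (Fin n)), orderOf φ = k) :
    ∃ (φ : MulAut (FreeGroup (Fin n))) (u : FreeGroup (Fin n)),
      {v : FreeGroup (Fin n) | ∃ m : ℕ, (φ ^ m) u = v}.ncard = k :=
  orbit_of_cardinality_k_exists_general n k hk h
end

section
/- For positive integers k, l (not both zero), the number of matrices A ∈ SL_2(ℤ) with a_{11} ≥ 0 and a_{12} ≤ 0 fixing the row vector (k, l) under right multiplication is at most 2. -/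
/-!
A matrix `A ∈ SL₂(ℤ)` fixing a nonzero vector has `A - 1` singular, and for `2 × 2` matrices
`det (A - 1) = det A - tr A + 1`, so `tr A = 2`. Writing `A = !![a, b; c, d]`, the second
coordinate of `(k, l) A = (k, l)` then reads `k b = l (a - 1)`; with `b ≤ 0 ≤ a` this forces
`a ∈ {0, 1}`. The case `a = 1` gives `A = 1`, and the case `a = 0` gives `b c = -1` with `l c = k`,
hence `A = !![0, -1; 1, 2]`.
-/

open Matrix

theorem Matrix.det_sub_one_fin_two {R : Type*} [CommRing R] (A : Matrix (Fin 2) (Fin 2) R) :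
    (A - 1).det = A.det - A.trace + 1 := by
  simp only [det_fin_two, trace_fin_two, sub_apply, one_apply_eq, ne_eq, zero_ne_one,
    not_false_eq_true, one_apply_ne, one_ne_zero]
  ring

theorem Matrix.SpecialLinearGroup.trace_eq_two_of_vecMul_eq_self {R : Type*} [CommRing R]
    [IsDomain R] (A : SpecialLinearGroup (Fin 2) R) {v : Fin 2 → R} (hv : v ≠ 0)
    (hfix : v ᵥ* (A : Matrix (Fin 2) (Fin 2) R) = v) :
    (A : Matrix (Fin 2) (Fin 2) R).trace = 2 := by
  have hsing : ((A : Matrix (Fin 2) (Fin 2) R) - 1).det = 0 :=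
    exists_vecMul_eq_zero_iff.mp ⟨v, hv, by rw [vecMul_sub, hfix, vecMul_one, sub_self]⟩
  rw [det_sub_one_fin_two, A.det_coe] at hsing
  linear_combination -hsing

def oneOneStabilizerGen : SpecialLinearGroup (Fin 2) ℤ :=
  ⟨!![0, -1; 1, 2], by simp [det_fin_two_of]⟩

theorem eq_one_or_eq_oneOneStabilizerGen_of_vecMul_eq_self {k l : ℤ} (hk : 0 < k) (hl : 0 < l)
    {A : SpecialLinearGroup (Fin 2) ℤ} (ha : 0 ≤ A 0 0) (hb : A 0 1 ≤ 0)
    (hfix : ![k, l] ᵥ* (A : Matrix (Fin 2) (Fin 2) ℤ) = ![k, l]) :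
    A = 1 ∨ A = oneOneStabilizerGen := by
  have htr := A.trace_eq_two_of_vecMul_eq_self (by simp [hk.ne']) hfix
  have hdet := A.det_coe
  have h0 := congrFun hfix 0
  have h1 := congrFun hfix 1
  simp only [vecMul, dotProduct, Fin.sum_univ_two, trace_fin_two, det_fin_two, cons_val_zero,
    cons_val_one] at htr hdet h0 h1
  have hkb : k * A 0 1 = l * (A 0 0 - 1) := by linear_combination h1 - l * htr
  have ha1 : A 0 0 ≤ 1 := by nlinarith [mul_nonpos_of_nonneg_of_nonpos hk.le hb]
  obtain h | h : A 0 0 = 1 ∨ A 0 0 = 0 := by omega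
  · left
    have hb0 : A 0 1 = 0 :=
      (mul_eq_zero.mp (by rw [hkb, h]; ring)).resolve_left hk.ne'
    have hc0 : A 1 0 = 0 :=
      (mul_eq_zero.mp (by linear_combination h0 - k * h)).resolve_left hl.ne'
    have hd1 : A 1 1 = 1 := by omega
    ext i j
    fin_cases i <;> fin_cases j <;> simp [h, hb0, hc0, hd1]
  · right
    have hd2 : A 1 1 = 2 := by omega
    have hlc : l * A 1 0 = k := by linear_combination h0 - k * h
    have hc_pos : 0 < A 1 0 := pos_of_mul_pos_right (hlc ▸ hk) hl.le
    have hb1 : A 0 1 = -1 := by nlinarith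
    have hc1 : A 1 0 = 1 := by nlinarith
    ext i j
    fin_cases i <;> fin_cases j <;> simp [oneOneStabilizerGen, h, hb1, hc1, hd2]

theorem sl2_fixing_positive_vector_count (k l : ℤ) (hk : 0 < k) (hl : 0 < l) :
    {A : Matrix.SpecialLinearGroup (Fin 2) ℤ |
      0 ≤ (A : Matrix (Fin 2) (Fin 2) ℤ) 0 0 ∧
      (A : Matrix (Fin 2) (Fin 2) ℤ) 0 1 ≤ 0 ∧
      Matrix.vecMul ![k, l] (A : Matrix (Fin 2) (Fin 2) ℤ) = ![k, l]}.ncard ≤ 2 := by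
  calc _ ≤ ({1, oneOneStabilizerGen} : Set (SpecialLinearGroup (Fin 2) ℤ)).ncard :=
        Set.ncard_le_ncard (fun _ hA ↦
          eq_one_or_eq_oneOneStabilizerGen_of_vecMul_eq_self hk hl hA.1 hA.2.1 hA.2.2) (Set.toFinite _)
    _ ≤ 2 := (Set.ncard_insert_le _ _).trans (by simp)
end

section
/- For odd m ≥ 1, the number of primitive elements of length m in the free group F_2 is greater than (8/(3√3))·(√3)^m. -/
def IsPrimitive (u : FreeGroup (Fin 2)) : Prop :=
  ∃ φ : FreeGroup (Fin 2) ≃* FreeGroup (Fin 2), φ (FreeGroup.of 0) = u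

/-!
Write `m = 2n + 3`. If `c` is a letter and `v` a reduced word of length `n + 1` whose first letter
involves the other generator, then `v⁻¹ c v` is a reduced word of length `m` with no cancellation,
and it is primitive as a conjugate of a generator or its inverse. There are `4 · 2 · 3ⁿ = 8 · 3ⁿ`
such words, and `8 / (3√3) · √3 ^ m = 8 · 3ⁿ`. One further primitive element of length `m` gives
the strict inequality: `a ^ (2n+2) b`, the image of `b` under a transvection. It is not of the form
`v⁻¹ c v`, since such a word begins with the inverse of its last letter. For `m = 1` the four
letters suffice, as `4 > 8 / 3`.
-/

open FreeGroup

theorem List.isChain_scanl {α β : Type*} {R : β → β → Prop} {f : β → α → β}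
    (hf : ∀ b a, R b (f b a)) (b : β) (l : List α) : (l.scanl f b).IsChain R := by
  induction l generalizing b with
  | nil => exact List.isChain_singleton b
  | cons a l ih =>
    rw [List.scanl_cons, List.isChain_cons]
    exact ⟨by simpa [List.head?_scanl] using hf b a, ih _⟩

theorem List.scanl_injective {α β : Type*} {f : β → α → β} (hf : ∀ b, Function.Injective (f b))
    (b : β) : Function.Injective (List.scanl f b) := by
  intro l l' h
  induction l generalizing b l' with
  | nil => cases l' <;> simp_all [List.scanl_cons]
  | cons a l ih =>
    cases l' with
    | nil => simp_all [List.scanl_cons]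
    | cons a' l' =>
      rw [List.scanl_cons, List.scanl_cons, List.cons.injEq] at h
      have ha : f b a = f b a' := by simpa [List.head?_scanl] using congrArg List.head? h.2
      rw [hf b ha, ih _ (hf b ha ▸ h.2)]

namespace FreeGroup

variable {α : Type*} {L : List (α × Bool)}

theorem getLast?_invRev : (invRev L).getLast? = L.head?.map fun g => (g.1, !g.2) := by
  rw [invRev, List.getLast?_reverse, List.head?_map]

theorem IsReduced.invRev (h : IsReduced L) : IsReduced (invRev L) := by
  rw [IsReduced, FreeGroup.invRev, List.isChain_reverse, List.isChain_map]
  exact h.imp fun _ _ hab e => by simp [hab e.symm]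

theorem IsReduced.toWord_mk [DecidableEq α] (h : IsReduced L) : (mk L).toWord = L :=
  FreeGroup.toWord_mk.trans h.reduce_eq

theorem isReduced_scanl {β : Type*} {f : α × Bool → β → α × Bool}
    (hf : ∀ x b, IsReduced [x, f x b]) (x : α × Bool) (l : List β) :
    IsReduced (l.scanl f x) :=
  List.isChain_scanl (fun x b => (isReduced_cons_cons.mp (hf x b)).1) x l

theorem isReduced_invRev_append_cons {c : α × Bool} (hL : IsReduced L)
    (hc : ∀ x ∈ L.head?, x.1 ≠ c.1) : IsReduced (invRev L ++ c :: L) := by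
  rw [IsReduced, List.isChain_append, List.isChain_cons, getLast?_invRev]
  refine ⟨hL.invRev, ⟨fun x hx e => absurd e.symm (hc x hx), hL⟩, ?_⟩
  simp only [Option.mem_map, List.head?_cons, Option.mem_some_iff]
  rintro _ ⟨x, hx, rfl⟩ _ rfl e
  exact absurd e (hc x hx)

theorem mk_invRev_append_cons (c : α × Bool) :
    mk (invRev L ++ c :: L) = (mk L)⁻¹ * mk [c] * mk L := by
  rw [inv_mk, mul_mk, mul_mk, List.append_assoc, List.singleton_append]

theorem map_fst_head?_invRev_append_cons (c : α × Bool) (hL : L ≠ []) :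
    (invRev L ++ c :: L).head?.map Prod.fst = (invRev L ++ c :: L).getLast?.map Prod.fst := by
  rw [← List.dropLast_append_getLast hL, ← List.cons_append, ← List.append_assoc,
    List.getLast?_concat]
  simp [invRev]

theorem isReduced_replicate_append_singleton {a b : α} (hab : a ≠ b) (K : ℕ) :
    IsReduced (List.replicate K (a, true) ++ [(b, true)]) := by
  rw [IsReduced, List.isChain_append]
  refine ⟨List.isChain_replicate_of_rel _ fun _ => rfl, List.isChain_singleton _, ?_⟩
  simp only [List.getLast?_replicate, List.head?_cons, Option.mem_some_iff]
  split_ifs <;> simp_all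

theorem mk_replicate_append_singleton [DecidableEq α] (a b : α) (K : ℕ) :
    mk (List.replicate K (a, true) ++ [(b, true)]) = of a ^ K * of b := by
  rw [← mul_mk, ← toWord_of_pow, mk_toWord]
  rfl

end FreeGroup

theorem IsPrimitive.map {u : FreeGroup (Fin 2)} (h : IsPrimitive u)
    (φ : FreeGroup (Fin 2) ≃* FreeGroup (Fin 2)) : IsPrimitive (φ u) := by
  obtain ⟨ψ, rfl⟩ := h
  exact ⟨ψ.trans φ, rfl⟩

theorem IsPrimitive.conj {u : FreeGroup (Fin 2)} (h : IsPrimitive u) (g : FreeGroup (Fin 2)) :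
    IsPrimitive (g⁻¹ * u * g) := by
  simpa using h.map (MulAut.conj g⁻¹)

theorem isPrimitive_of (i : Fin 2) : IsPrimitive (of i) := by
  fin_cases i
  · exact ⟨MulEquiv.refl _, rfl⟩
  · exact ⟨freeGroupCongr (Equiv.swap 0 1), by simp⟩

def invGenerators : FreeGroup (Fin 2) ≃* FreeGroup (Fin 2) :=
  (FreeGroup.lift fun i => (of i)⁻¹).toMulEquiv (FreeGroup.lift fun i => (of i)⁻¹)
    (ext_hom _ _ fun i => by simp) (ext_hom _ _ fun i => by simp)

theorem IsPrimitive.inv {u : FreeGroup (Fin 2)} (h : IsPrimitive u) : IsPrimitive u⁻¹ := by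
  obtain ⟨φ, rfl⟩ := h
  exact ⟨invGenerators.trans φ, by simp [invGenerators]⟩

theorem isPrimitive_mk_singleton (c : Fin 2 × Bool) : IsPrimitive (mk [c]) := by
  obtain ⟨i, _ | _⟩ := c
  · exact (isPrimitive_of i).inv
  · exact isPrimitive_of i

def transvection (K : ℕ) : FreeGroup (Fin 2) ≃* FreeGroup (Fin 2) :=
  (FreeGroup.lift ![of 0, of 0 ^ K * of 1]).toMulEquiv
    (FreeGroup.lift ![of 0, (of 0 ^ K)⁻¹ * of 1])
    (ext_hom _ _ fun i => by fin_cases i <;> simp)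
    (ext_hom _ _ fun i => by fin_cases i <;> simp)

theorem isPrimitive_of_pow_mul_of (K : ℕ) : IsPrimitive (of 0 ^ K * of 1) := by
  simpa [transvection] using (isPrimitive_of 1).map (transvection K)

/-- The three letters that may follow `x` in a reduced word. -/
def nextLetter : Fin 2 × Bool → Fin 3 → Fin 2 × Bool
  | x, 0 => x
  | (i, _), 1 => (i + 1, true)
  | (i, _), 2 => (i + 1, false)

theorem nextLetter_injective : ∀ x, Function.Injective (nextLetter x) := by
  unfold Function.Injective
  decide

theorem isReduced_pair_nextLetter : ∀ x i, IsReduced [x, nextLetter x i] := by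
  unfold FreeGroup.IsReduced
  decide

def conjugateWord {n : ℕ} : (Fin 2 × Bool) × Bool × (Fin n → Fin 3) → List (Fin 2 × Bool)
  | (c, β, f) =>
    invRev ((List.ofFn f).scanl nextLetter (c.1 + 1, β)) ++
      c :: (List.ofFn f).scanl nextLetter (c.1 + 1, β)

theorem isReduced_conjugateWord {n : ℕ} (p : (Fin 2 × Bool) × Bool × (Fin n → Fin 3)) :
    IsReduced (conjugateWord p) := by
  obtain ⟨c, β, f⟩ := p
  refine isReduced_invRev_append_cons (isReduced_scanl isReduced_pair_nextLetter _ _) ?_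
  simp [List.head?_scanl]

theorem length_conjugateWord {n : ℕ} (p : (Fin 2 × Bool) × Bool × (Fin n → Fin 3)) :
    (conjugateWord p).length = 2 * n + 3 := by
  obtain ⟨c, β, f⟩ := p
  simp only [conjugateWord, List.length_append, invRev_length, List.length_scanl,
    List.length_ofFn, List.length_cons]
  omega

theorem isPrimitive_mk_conjugateWord {n : ℕ} (p : (Fin 2 × Bool) × Bool × (Fin n → Fin 3)) :
    IsPrimitive (mk (conjugateWord p)) := by
  rw [conjugateWord, mk_invRev_append_cons]
  exact (isPrimitive_mk_singleton _).conj _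

theorem conjugateWord_injective (n : ℕ) : Function.Injective (@conjugateWord n) := by
  rintro ⟨c, β, f⟩ ⟨c', β', f'⟩ h
  obtain ⟨-, h⟩ := List.append_inj h (by simp [List.length_scanl])
  obtain ⟨rfl, h⟩ := List.cons.inj h
  have hβ : β = β' := by simpa [List.head?_scanl] using congrArg List.head? h
  subst hβ
  rw [List.ofFn_injective (List.scanl_injective nextLetter_injective _ h)]

theorem map_fst_head?_conjugateWord {n : ℕ} (p : (Fin 2 × Bool) × Bool × (Fin n → Fin 3)) :
    (conjugateWord p).head?.map Prod.fst = (conjugateWord p).getLast?.map Prod.fst :=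
  map_fst_head?_invRev_append_cons _ List.scanl_ne_nil

theorem conjugateWord_ne_replicate_append_singleton {n : ℕ}
    (p : (Fin 2 × Bool) × Bool × (Fin n → Fin 3)) (K : ℕ) :
    conjugateWord p ≠ List.replicate (K + 1) ((0 : Fin 2), true) ++ [((1 : Fin 2), true)] := by
  intro h
  have hends := map_fst_head?_conjugateWord p
  rw [h] at hends
  simp [List.replicate_succ, List.getLast?_cons, List.getLast?_append] at hends

def primitivesOfLength (m : ℕ) : Set (FreeGroup (Fin 2)) :=
  {u | IsPrimitive u ∧ u.toWord.length = m}

theorem primitivesOfLength_finite (m : ℕ) : (primitivesOfLength m).Finite :=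
  ((List.finite_length_eq _ m).preimage toWord_injective.injOn).subset fun _ hu => hu.2

theorem card_le_ncard_primitivesOfLength {ι : Type*} {m : ℕ} (w : ι → List (Fin 2 × Bool))
    (hw : Function.Injective w) (hred : ∀ i, IsReduced (w i))
    (hprim : ∀ i, IsPrimitive (mk (w i))) (hlen : ∀ i, (w i).length = m) :
    Nat.card ι ≤ (primitivesOfLength m).ncard := by
  rw [← Set.ncard_univ]
  refine Set.ncard_le_ncard_of_injOn (fun i => mk (w i))
    (fun i _ => ⟨hprim i, by rw [(hred i).toWord_mk, hlen i]⟩) ?_ (primitivesOfLength_finite m)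
  intro i _ j _ h
  apply hw
  rw [← (hred i).toWord_mk, ← (hred j).toWord_mk]
  exact congrArg toWord h

theorem four_le_ncard_primitivesOfLength_one : 4 ≤ (primitivesOfLength 1).ncard := by
  simpa using card_le_ncard_primitivesOfLength (fun c : Fin 2 × Bool => [c])
    (fun _ _ h => List.singleton_injective h) (fun _ => IsReduced.singleton)
    isPrimitive_mk_singleton (fun _ => rfl)

def oddLengthWord (n : ℕ) :
    Option ((Fin 2 × Bool) × Bool × (Fin n → Fin 3)) → List (Fin 2 × Bool)
  | none => List.replicate (2 * n + 2) (0, true) ++ [(1, true)]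
  | some p => conjugateWord p

theorem oddLengthWord_injective (n : ℕ) : Function.Injective (oddLengthWord n) := by
  rintro (_ | p) (_ | q) h
  · rfl
  · exact absurd h.symm (conjugateWord_ne_replicate_append_singleton q _)
  · exact absurd h (conjugateWord_ne_replicate_append_singleton p _)
  · exact congrArg some (conjugateWord_injective n h)

theorem le_ncard_primitivesOfLength_two_mul_add_three (n : ℕ) :
    8 * 3 ^ n + 1 ≤ (primitivesOfLength (2 * n + 3)).ncard := by
  have hcard : Nat.card (Option ((Fin 2 × Bool) × Bool × (Fin n → Fin 3))) = 8 * 3 ^ n + 1 := by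
    simp only [Nat.card_eq_fintype_card, Fintype.card_option, Fintype.card_prod,
      Fintype.card_fun, Fintype.card_fin, Fintype.card_bool]
    ring
  rw [← hcard]
  refine card_le_ncard_primitivesOfLength (oddLengthWord n) (oddLengthWord_injective n) ?_ ?_ ?_
  · rintro (_ | p)
    · exact isReduced_replicate_append_singleton (by decide) _
    · exact isReduced_conjugateWord p
  · rintro (_ | p)
    · rw [oddLengthWord, mk_replicate_append_singleton]
      exact isPrimitive_of_pow_mul_of _
    · exact isPrimitive_mk_conjugateWord p
  · rintro (_ | p)
    · simp [oddLengthWord]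
    · exact length_conjugateWord p

theorem primitive_count_odd_general (m : ℕ) (hm : Odd m) :
    (8 / (3 * Real.sqrt 3)) * (Real.sqrt 3) ^ m <
      (({u : FreeGroup (Fin 2) | IsPrimitive u ∧ u.toWord.length = m}.ncard : ℝ)) := by
  have hsqrt : Real.sqrt 3 ^ 2 = 3 := Real.sq_sqrt (by norm_num)
  obtain ⟨_ | n, rfl⟩ := hm
  · calc 8 / (3 * Real.sqrt 3) * Real.sqrt 3 ^ (2 * 0 + 1) = 8 / 3 := by
          rw [mul_zero, zero_add, pow_one]
          field_simp
      _ < 4 := by norm_num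
      _ ≤ ((primitivesOfLength 1).ncard : ℝ) := by
          exact_mod_cast four_le_ncard_primitivesOfLength_one
  · calc 8 / (3 * Real.sqrt 3) * Real.sqrt 3 ^ (2 * (n + 1) + 1) = 8 * 3 ^ n := by
          rw [pow_succ, pow_mul, hsqrt]
          field_simp
          ring
      _ < 8 * 3 ^ n + 1 := by linarith
      _ ≤ ((primitivesOfLength (2 * n + 3)).ncard : ℝ) := by
          exact_mod_cast le_ncard_primitivesOfLength_two_mul_add_three n

theorem primitive_count_odd (m : ℕ) (hm : Odd m) (h1 : 1 ≤ m) :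
    (8 / (3 * Real.sqrt 3)) * (Real.sqrt 3) ^ m <
      (({u : FreeGroup (Fin 2) | IsPrimitive u ∧ u.toWord.length = m}.ncard : ℝ)) :=
  primitive_count_odd_general m hm
end
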